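/- (Spectral manifolds) Let (θ, Φ) be an ergodic linear random dynamical system on ℝ^d whose dichotomy spectrum is Σ = [a₁, b₁] ∪ … ∪ [a_n, b_n] with −∞ ≤ a₁ ≤ b₁ < a₂ ≤ b₂ < … < a_n ≤ b_n ≤ +∞. Set P_{γ₀} := 0 and P_{γ_n} := Id, and for each i ∈ {1, …, n−1} choose γ_i ∈ (b_i, a_{i+1}) and an invariant projector P_{γ_i} of an exponential dichotomy of (θ, Φ) with growth rate γ_i. Define W_i(ω) := range P_{γ_i}(ω) ∩ ker P_{γ_{i−1}}(ω) for i ∈ {1, …, n}. Then for ℙ-almost every ω ∈ Ω: ℝ^d = W₁(ω) ⊕ … ⊕ W_n(ω), and W_i(ω) ≠ {0} for every i ∈ {1, …, n}. -/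

import Mathlib

open MeasureTheory Filter

noncomputable section

/-- A linear random dynamical system `(θ, Φ)` on `ℝ^d` over the probability space `(Ω, 𝓕, ℙ)`:
`θ` is a measure-preserving measurable dynamical system on `Ω`, and `Φ` is a measurable
cocycle over `θ` taking values in the invertible continuous linear maps of `ℝ^d`. -/
structure LinRDS {Ω : Type*} [MeasurableSpace Ω] (ℙ : Measure Ω) (d : ℕ) where
  θ : ℝ → Ω → Ω
  Φ : ℝ → Ω → EuclideanSpace ℝ (Fin d) →L[ℝ] EuclideanSpace ℝ (Fin d)
  θ_meas : Measurable fun p : ℝ × Ω => θ p.1 p.2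
  θ_zero : ∀ ω, θ 0 ω = ω
  θ_add : ∀ t s ω, θ (t + s) ω = θ t (θ s ω)
  θ_pres : ∀ t, MeasurePreserving (θ t) ℙ ℙ
  Φ_meas : ∀ x, Measurable fun p : ℝ × Ω => Φ p.1 p.2 x
  Φ_zero : ∀ ω, Φ 0 ω = 1
  Φ_cocycle : ∀ t s ω, Φ (t + s) ω = Φ t (θ s ω) * Φ s ω
  Φ_isUnit : ∀ t ω, IsUnit (Φ t ω)

variable {Ω : Type*} [MeasurableSpace Ω] {ℙ : Measure Ω} {d : ℕ}

/-- The base of the linear random dynamical system is ergodic. -/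
def LinRDS.IsErgodic (S : LinRDS ℙ d) : Prop :=
  ∀ A : Set Ω, MeasurableSet A → (∀ t, S.θ t ⁻¹' A = A) → ℙ A = 0 ∨ ℙ A = 1

/-- An invariant projector of a linear random dynamical system. -/
def LinRDS.InvProjector (S : LinRDS ℙ d)
    (P : Ω → EuclideanSpace ℝ (Fin d) →L[ℝ] EuclideanSpace ℝ (Fin d)) : Prop :=
  (∀ x, Measurable fun ω => P ω x) ∧ (∀ ω, P ω * P ω = P ω) ∧
    ∀ t ω, P (S.θ t ω) * S.Φ t ω = S.Φ t ω * P ω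

/-- `(θ, Φ)` admits an exponential dichotomy with growth rate `γ` and invariant projector `P`. -/
def LinRDS.IsED (S : LinRDS ℙ d) (γ : ℝ)
    (P : Ω → EuclideanSpace ℝ (Fin d) →L[ℝ] EuclideanSpace ℝ (Fin d)) : Prop :=
  S.InvProjector P ∧ ∃ a > (0:ℝ), ∃ K ≥ (1:ℝ), ∀ᵐ ω ∂ℙ,
    (∀ t : ℝ, 0 ≤ t → ‖S.Φ t ω * P ω‖ ≤ K * Real.exp ((γ - a) * t)) ∧
    (∀ t : ℝ, t ≤ 0 → ‖S.Φ t ω * (1 - P ω)‖ ≤ K * Real.exp ((γ + a) * t))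

/-- `(θ, Φ)` admits an exponential dichotomy with real growth rate `γ`. -/
def LinRDS.AdmitsED (S : LinRDS ℙ d) (γ : ℝ) : Prop :=
  ∃ P, S.IsED γ P

/-- `(θ, Φ)` admits an exponential dichotomy with extended-real growth rate `γ`; for
`γ = ±∞` this means an exponential dichotomy with some real growth rate whose projector
is a.s. the identity (resp. a.s. zero). -/
def LinRDS.AdmitsEDE (S : LinRDS ℙ d) (γ : EReal) : Prop :=
  (∃ g : ℝ, γ = (g : EReal) ∧ S.AdmitsED g) ∨
  (γ = ⊤ ∧ ∃ g : ℝ, ∃ P, S.IsED g P ∧ ∀ᵐ ω ∂ℙ, P ω = 1) ∨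
  (γ = ⊥ ∧ ∃ g : ℝ, ∃ P, S.IsED g P ∧ ∀ᵐ ω ∂ℙ, P ω = 0)

/-- The dichotomy spectrum of `(θ, Φ)`, a subset of the extended real line. -/
def LinRDS.spectrum (S : LinRDS ℙ d) : Set EReal :=
  {γ | ¬ S.AdmitsEDE γ}

/-- The rank of a continuous linear map on `ℝ^d`. -/
def clmRank (P : EuclideanSpace ℝ (Fin d) →L[ℝ] EuclideanSpace ℝ (Fin d)) : ℕ :=
  Module.finrank ℝ (LinearMap.range
    (P : EuclideanSpace ℝ (Fin d) →ₗ[ℝ] EuclideanSpace ℝ (Fin d)))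

/-!
For rates `γ ≤ γ'` the dichotomy projectors `P`, `P'` are almost surely nested, `P' P = P = P P'`.
Invariance gives `(1 - P' ω) (P ω) = [Φ(-t, θ_t ω) (1 - P' (θ_t ω))] (1 - P' (θ_t ω)) [Φ(t, ω) P ω]`,
and the two dichotomy estimates bound the right side by `C exp ((γ - γ' - a - a') t) → 0` as
`t → ∞` (by Fubini they hold at `θ_t ω` for almost every `t`); symmetrically `P (1 - P') = 0`,
letting `t → -∞`. Nested projectors from `0` to `1` make the differences `P_{i+1} - P_i` complete
orthogonal idempotents with ranges `W_i`, whence the direct sum. Finally `{ω | P_i ω = P_{i+1} ω}` is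
`θ`-invariant, hence null or conull by ergodicity; were it conull, the common projector would give an
exponential dichotomy at a point of `[a_i, b_i] ⊆ Σ`.
-/

open Topology

namespace CompleteOrthogonalIdempotents

variable {R M I : Type*} [Ring R] [AddCommGroup M] [Module R M] [Fintype I] [DecidableEq I]

theorem isInternal_range {e : I → Module.End R M} (he : CompleteOrthogonalIdempotents e) :
    DirectSum.IsInternal fun i => LinearMap.range (e i) := by
  have hfix : ∀ i, ∀ x ∈ LinearMap.range (e i), e i x = x := by
    rintro i _ ⟨y, rfl⟩
    exact congr($(he.idem i) y)
  have hkill : ∀ i j, i ≠ j → LinearMap.range (e j) ≤ LinearMap.ker (e i) := by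
    rintro i j hij _ ⟨y, rfl⟩
    exact congr($(he.ortho hij) y)
  refine (DirectSum.isInternal_submodule_iff_iSupIndep_and_iSup_eq_top _).2 ⟨?_, ?_⟩
  · refine fun i => Submodule.disjoint_def.2 fun x hx hx' => ?_
    have : (⨆ (j) (_ : j ≠ i), LinearMap.range (e j)) ≤ LinearMap.ker (e i) :=
      iSup₂_le fun j hj => hkill i j (Ne.symm hj)
    rw [← hfix i x hx]
    exact this hx'
  · refine eq_top_iff.2 fun x _ => ?_
    have hx : ∑ i, e i x = x := by simpa using congr($(he.complete) x)
    rw [← hx]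
    exact Submodule.sum_mem _ fun i _ => Submodule.mem_iSup_of_mem i (LinearMap.mem_range_self _ _)

end CompleteOrthogonalIdempotents

theorem completeOrthogonalIdempotents_succ_sub {R : Type*} [Ring R] {n : ℕ} {Q : ℕ → R}
    (h0 : Q 0 = 0) (hn : Q n = 1)
    (hle : ∀ i j, i ≤ j → j ≤ n → Q j * Q i = Q i ∧ Q i * Q j = Q i) :
    CompleteOrthogonalIdempotents fun i : Fin n => Q (i + 1) - Q i where
  idem i := by
    have hi := hle i i le_rfl i.is_lt.le
    have hi' := hle (i + 1) (i + 1) le_rfl i.is_lt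
    exact IsIdempotentElem.sub hi.1 hi'.1 (hle i (i + 1) (by omega) i.is_lt).2
      (hle i (i + 1) (by omega) i.is_lt).1
  ortho i j hij := by
    simp only [mul_sub, sub_mul]
    rcases lt_or_gt_of_ne (Fin.val_ne_of_ne hij) with h | h
    · rw [(hle (i + 1) (j + 1) (by omega) j.is_lt).2, (hle (i + 1) j h j.is_lt.le).2,
        (hle i (j + 1) (by omega) j.is_lt).2, (hle i j h.le j.is_lt.le).2]
      abel
    · rw [(hle (j + 1) (i + 1) (by omega) i.is_lt).1, (hle j (i + 1) (by omega) i.is_lt).1,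
        (hle (j + 1) i h i.is_lt.le).1, (hle j i h.le i.is_lt.le).1]
      abel
  complete := by
    rw [Fin.sum_univ_eq_sum_range (fun i => Q (i + 1) - Q i), Finset.sum_range_sub, hn, h0,
      sub_zero]

theorem LinearMap.range_sub_eq_range_inf_ker {R M : Type*} [Ring R] [AddCommGroup M]
    [Module R M] {p q : Module.End R M} (hp : IsIdempotentElem p) (hq : IsIdempotentElem q)
    (hpq : p * q = p) (hqp : q * p = p) :
    LinearMap.range (q - p) = LinearMap.range q ⊓ LinearMap.ker p := by
  apply le_antisymm
  · rintro _ ⟨x, rfl⟩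
    refine Submodule.mem_inf.2 ⟨⟨q x - p x, ?_⟩, LinearMap.mem_ker.2 ?_⟩
    · rw [map_sub, ← Module.End.mul_apply, ← Module.End.mul_apply, hq.eq, hqp]
      rfl
    · rw [LinearMap.sub_apply, map_sub, ← Module.End.mul_apply, ← Module.End.mul_apply, hp.eq,
        hpq, sub_self]
  · intro x hx
    obtain ⟨⟨y, rfl⟩, hy⟩ := Submodule.mem_inf.1 hx
    refine ⟨q y, ?_⟩
    rw [LinearMap.sub_apply, LinearMap.mem_ker.1 hy, sub_zero, ← Module.End.mul_apply, hq.eq]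

theorem isInternal_range_inf_ker_of_chain {R M : Type*} [Ring R] [AddCommGroup M] [Module R M]
    {n : ℕ} {Q : ℕ → Module.End R M} (h0 : Q 0 = 0) (hn : Q n = 1)
    (hle : ∀ i j, i ≤ j → j ≤ n → Q j * Q i = Q i ∧ Q i * Q j = Q i)
    (hne : ∀ i < n, Q i ≠ Q (i + 1)) :
    DirectSum.IsInternal (fun i : Fin n => LinearMap.range (Q (i + 1)) ⊓ LinearMap.ker (Q i)) ∧
      ∀ i : Fin n, LinearMap.range (Q (i + 1)) ⊓ LinearMap.ker (Q i) ≠ ⊥ := by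
  have hW : (fun i : Fin n => LinearMap.range (Q (i + 1)) ⊓ LinearMap.ker (Q i)) =
      fun i : Fin n => LinearMap.range (Q (i + 1) - Q i) := by
    ext1 i
    have hi := hle i (i + 1) (by omega) i.is_lt
    exact (LinearMap.range_sub_eq_range_inf_ker (hle i i le_rfl i.is_lt.le).1
      (hle (i + 1) (i + 1) le_rfl i.is_lt).1 hi.2 hi.1).symm
  refine ⟨hW ▸ (completeOrthogonalIdempotents_succ_sub h0 hn hle).isInternal_range, fun i => ?_⟩
  rw [congrFun hW i, Ne, LinearMap.range_eq_bot, sub_eq_zero]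
  exact (hne i i.is_lt).symm

theorem MeasureTheory.frequently_of_ae {α : Type*} [MeasurableSpace α] {μ : Measure α}
    {l : Filter α} {p : α → Prop} (h : ∀ᵐ x ∂μ, p x) (hl : ∀ s ∈ l, μ s ≠ 0) :
    ∃ᶠ x in l, p x :=
  fun hev => hl _ hev (ae_iff.1 h)

theorem Real.frequently_atTop_of_ae {p : ℝ → Prop} (h : ∀ᵐ t, p t) : ∃ᶠ t in atTop, p t :=
  frequently_of_ae h fun s hs => by
    obtain ⟨T, hT⟩ := mem_atTop_sets.1 hs
    exact ne_bot_of_le_ne_bot (by simp) (measure_mono (fun t ht => hT t ht : Set.Ici T ⊆ s))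

theorem Real.frequently_atBot_of_ae {p : ℝ → Prop} (h : ∀ᵐ t, p t) : ∃ᶠ t in atBot, p t :=
  frequently_of_ae h fun s hs => by
    obtain ⟨T, hT⟩ := mem_atBot_sets.1 hs
    exact ne_bot_of_le_ne_bot (by simp) (measure_mono (fun t ht => hT t ht : Set.Iic T ⊆ s))

theorem ContinuousLinearMap.measurableSet_eq {α E F : Type*} [MeasurableSpace α]
    [NormedAddCommGroup E] [NormedSpace ℝ E] [FiniteDimensional ℝ E]
    [NormedAddCommGroup F] [NormedSpace ℝ F] [MeasurableSpace F] [BorelSpace F]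
    [SecondCountableTopology F] {f g : α → E →L[ℝ] F}
    (hf : ∀ x, Measurable fun a => f a x) (hg : ∀ x, Measurable fun a => g a x) :
    MeasurableSet {a | f a = g a} := by
  let b := Module.finBasis ℝ E
  have : {a | f a = g a} = ⋂ i, {a | f a (b i) = g a (b i)} := by
    ext a
    simp only [Set.mem_ofPred_eq, Set.mem_iInter]
    exact ⟨fun h i => h ▸ rfl, fun h => ContinuousLinearMap.coe_injective (b.ext h)⟩
  rw [this]
  exact MeasurableSet.iInter fun i => measurableSet_eq_fun (hf _) (hg _)

namespace LinRDS

variable {Ω : Type*} [MeasurableSpace Ω] {ℙ : Measure Ω} {d : ℕ} (S : LinRDS ℙ d)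

local notation "E" => EuclideanSpace ℝ (Fin d)

theorem Φ_neg_mul_Φ (t : ℝ) (ω : Ω) : S.Φ (-t) (S.θ t ω) * S.Φ t ω = 1 := by
  rw [← S.Φ_cocycle, neg_add_cancel, S.Φ_zero]

theorem ae_ae_comp_θ [SFinite ℙ] {p : Ω → Prop} (h : ∀ᵐ ω ∂ℙ, p ω) :
    ∀ᵐ ω ∂ℙ, ∀ᵐ t, p (S.θ t ω) := by
  obtain ⟨N, hpN, hNm, hN0⟩ := exists_measurable_superset_of_null (ae_iff.1 h)
  have hN : ∀ t, ∀ᵐ ω ∂ℙ, S.θ t ω ∉ N := fun t =>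
    (S.θ_pres t).quasiMeasurePreserving.ae (measure_eq_zero_iff_ae_notMem.1 hN0)
  have hmeas : MeasurableSet {x : Ω × ℝ | S.θ x.2 x.1 ∉ N} :=
    (S.θ_meas.comp measurable_swap hNm).compl
  filter_upwards [(Measure.ae_ae_comm (μ := ℙ) (ν := volume) hmeas).2 (ae_of_all _ hN)] with ω hω
  filter_upwards [hω] with t ht
  by_contra hp
  exact ht (hpN hp)

variable {S}

theorem InvProjector.one_sub {P : Ω → E →L[ℝ] E} (hP : S.InvProjector P) :
    S.InvProjector fun ω => 1 - P ω := by
  refine ⟨fun x => ?_, fun ω => IsIdempotentElem.one_sub (hP.2.1 ω), fun t ω => ?_⟩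
  · exact measurable_const.sub (hP.1 x)
  · rw [sub_mul, mul_sub, hP.2.2, one_mul, mul_one]

theorem InvProjector.mul_eq_conj {P : Ω → E →L[ℝ] E} (hP : S.InvProjector P)
    (X : E →L[ℝ] E) (t : ℝ) (ω : Ω) :
    P ω * X = S.Φ (-t) (S.θ t ω) * P (S.θ t ω) * P (S.θ t ω) * (S.Φ t ω * X) := by
  simp only [mul_assoc]
  rw [← mul_assoc (P _) (P _), hP.2.1, ← mul_assoc (P _), hP.2.2, ← mul_assoc, ← mul_assoc,
    Φ_neg_mul_Φ, one_mul]

theorem InvProjector.norm_mul_le_conj {P : Ω → E →L[ℝ] E} (hP : S.InvProjector P)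
    (X : E →L[ℝ] E) (t : ℝ) (ω : Ω) :
    ‖P ω * X‖ ≤
      ‖S.Φ (-t) (S.θ t ω) * P (S.θ t ω)‖ * ‖P (S.θ t ω)‖ * ‖S.Φ t ω * X‖ := by
  rw [hP.mul_eq_conj X t]
  exact (norm_mul_le _ _).trans (by gcongr; exact norm_mul_le _ _)

theorem IsED.one_sub_mul_ae_eq_zero [SFinite ℙ] {γ γ' : ℝ} {P Q : Ω → E →L[ℝ] E}
    (hP : S.IsED γ P) (hQ : S.IsED γ' Q) (hγ : γ ≤ γ') :
    ∀ᵐ ω ∂ℙ, (1 - Q ω) * P ω = 0 := by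
  obtain ⟨-, a, ha, K, hK, hPb⟩ := hP
  obtain ⟨hQ, a', ha', K', hK', hQb⟩ := hQ
  filter_upwards [hPb, S.ae_ae_comp_θ hQb] with ω hPω hQθ
  have hlim : Tendsto (fun t => K' * K' * K * Real.exp ((γ - γ' - (a + a')) * t)) atTop (𝓝 0) := by
    simpa using (Real.tendsto_exp_atBot.comp
      (tendsto_id.const_mul_atTop_of_neg (by linarith))).const_mul (K' * K' * K)
  refine norm_le_zero_iff.1 (ge_of_tendsto_of_frequently hlim ?_)
  refine ((Real.frequently_atTop_of_ae hQθ).and_eventually (eventually_ge_atTop 0)).mono ?_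
  rintro t ⟨hQt, ht⟩
  have hQ1 : ‖1 - Q (S.θ t ω)‖ ≤ K' := by simpa [S.Φ_zero] using hQt.2 0 le_rfl
  calc ‖(1 - Q ω) * P ω‖
      ≤ ‖S.Φ (-t) (S.θ t ω) * (1 - Q (S.θ t ω))‖ * ‖1 - Q (S.θ t ω)‖ * ‖S.Φ t ω * P ω‖ :=
        hQ.one_sub.norm_mul_le_conj _ t ω
    _ ≤ K' * Real.exp ((γ' + a') * -t) * K' * (K * Real.exp ((γ - a) * t)) := by
        gcongr
        · exact hQt.2 _ (by linarith)
        · exact hPω.1 t ht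
    _ = K' * K' * K * Real.exp ((γ - γ' - (a + a')) * t) := by
        rw [show (γ - γ' - (a + a')) * t = (γ' + a') * -t + (γ - a) * t by ring, Real.exp_add]
        ring

theorem IsED.mul_one_sub_ae_eq_zero [SFinite ℙ] {γ γ' : ℝ} {P Q : Ω → E →L[ℝ] E}
    (hP : S.IsED γ P) (hQ : S.IsED γ' Q) (hγ : γ ≤ γ') :
    ∀ᵐ ω ∂ℙ, P ω * (1 - Q ω) = 0 := by
  obtain ⟨hP, a, ha, K, hK, hPb⟩ := hP
  obtain ⟨-, a', ha', K', hK', hQb⟩ := hQ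
  filter_upwards [hQb, S.ae_ae_comp_θ hPb] with ω hQω hPθ
  have hlim : Tendsto (fun t => K * K * K' * Real.exp ((γ' - γ + (a + a')) * t)) atBot (𝓝 0) := by
    simpa using (Real.tendsto_exp_atBot.comp
      (tendsto_id.const_mul_atBot (by linarith))).const_mul (K * K * K')
  refine norm_le_zero_iff.1 (ge_of_tendsto_of_frequently hlim ?_)
  refine ((Real.frequently_atBot_of_ae hPθ).and_eventually (eventually_le_atBot 0)).mono ?_
  rintro t ⟨hPt, ht⟩
  have hP1 : ‖P (S.θ t ω)‖ ≤ K := by simpa [S.Φ_zero] using hPt.1 0 le_rfl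
  calc ‖P ω * (1 - Q ω)‖
      ≤ ‖S.Φ (-t) (S.θ t ω) * P (S.θ t ω)‖ * ‖P (S.θ t ω)‖ * ‖S.Φ t ω * (1 - Q ω)‖ :=
        hP.norm_mul_le_conj _ t ω
    _ ≤ K * Real.exp ((γ - a) * -t) * K * (K' * Real.exp ((γ' + a') * t)) := by
        gcongr
        · exact hPt.1 _ (by linarith)
        · exact hQω.2 t ht
    _ = K * K * K' * Real.exp ((γ' - γ + (a + a')) * t) := by
        rw [show (γ' - γ + (a + a')) * t = (γ - a) * -t + (γ' + a') * t by ring, Real.exp_add]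
        ring

theorem IsED.ae_mul_eq_of_le [SFinite ℙ] {γ γ' : ℝ} {P Q : Ω → E →L[ℝ] E}
    (hP : S.IsED γ P) (hQ : S.IsED γ' Q) (hγ : γ ≤ γ') :
    ∀ᵐ ω ∂ℙ, Q ω * P ω = P ω ∧ P ω * Q ω = P ω := by
  filter_upwards [hP.one_sub_mul_ae_eq_zero hQ hγ, hP.mul_one_sub_ae_eq_zero hQ hγ] with ω h₁ h₂
  rw [sub_mul, one_mul, sub_eq_zero] at h₁
  rw [mul_sub, mul_one, sub_eq_zero] at h₂
  exact ⟨h₁.symm, h₂.symm⟩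

theorem invProjector_zero : S.InvProjector fun _ => 0 :=
  ⟨fun _ => measurable_const, fun _ => mul_zero 0, fun _ _ => by rw [zero_mul, mul_zero]⟩

theorem invProjector_one : S.InvProjector fun _ => 1 :=
  ⟨fun _ => measurable_const, fun _ => mul_one 1, fun _ _ => by rw [one_mul, mul_one]⟩

theorem IsED.congr_ae {γ : ℝ} {P Q : Ω → E →L[ℝ] E} (hQ : S.IsED γ Q) (hP : S.InvProjector P)
    (h : ∀ᵐ ω ∂ℙ, P ω = Q ω) : S.IsED γ P := by
  obtain ⟨-, a, ha, K, hK, hb⟩ := hQ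
  refine ⟨hP, a, ha, K, hK, ?_⟩
  filter_upwards [hb, h] with ω hω hPQ
  rwa [hPQ]

theorem IsED.of_le_of_le {γ₁ γ₂ g : ℝ} {P : Ω → E →L[ℝ] E} (h₁ : S.IsED γ₁ P)
    (h₂ : S.IsED γ₂ P) (hg₁ : γ₁ ≤ g) (hg₂ : g ≤ γ₂) : S.IsED g P := by
  obtain ⟨hP, a₁, ha₁, K₁, hK₁, hb₁⟩ := h₁
  obtain ⟨-, a₂, ha₂, K₂, -, hb₂⟩ := h₂
  refine ⟨hP, min a₁ a₂, lt_min ha₁ ha₂, max K₁ K₂, hK₁.trans (le_max_left _ _), ?_⟩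
  filter_upwards [hb₁, hb₂] with ω hω₁ hω₂
  refine ⟨fun t ht => (hω₁.1 t ht).trans ?_, fun t ht => (hω₂.2 t ht).trans ?_⟩
  · gcongr
    · exact le_max_left _ _
    · linarith [min_le_left a₁ a₂]
  · gcongr ?_ * Real.exp ?_
    · exact le_max_right _ _
    · exact mul_le_mul_of_nonpos_right (by linarith [min_le_right a₁ a₂]) ht

theorem IsED.of_ae_eq_zero {γ g : ℝ} {P : Ω → E →L[ℝ] E} (h : S.IsED γ P)
    (h0 : ∀ᵐ ω ∂ℙ, P ω = 0) (hg : g ≤ γ) : S.IsED g P := by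
  obtain ⟨hP, a, ha, K, hK, hb⟩ := h
  refine ⟨hP, a, ha, K, hK, ?_⟩
  filter_upwards [hb, h0] with ω hω hω0
  refine ⟨fun t _ => ?_, fun t ht => (hω.2 t ht).trans ?_⟩
  · rw [hω0, mul_zero, norm_zero]
    positivity
  · gcongr ?_ * Real.exp ?_
    exact mul_le_mul_of_nonpos_right (by linarith) ht

theorem IsED.of_ae_eq_one {γ g : ℝ} {P : Ω → E →L[ℝ] E} (h : S.IsED γ P)
    (h1 : ∀ᵐ ω ∂ℙ, P ω = 1) (hg : γ ≤ g) : S.IsED g P := by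
  obtain ⟨hP, a, ha, K, hK, hb⟩ := h
  refine ⟨hP, a, ha, K, hK, ?_⟩
  filter_upwards [hb, h1] with ω hω hω1
  refine ⟨fun t ht => (hω.1 t ht).trans ?_, fun t _ => ?_⟩
  · gcongr
  · rw [hω1, sub_self, mul_zero, norm_zero]
    positivity

theorem IsED.admitsEDE_of_le_of_le {γ₁ γ₂ : ℝ} {P : Ω → E →L[ℝ] E} (h₁ : S.IsED γ₁ P)
    (h₂ : S.IsED γ₂ P) {x : EReal} (hx₁ : γ₁ ≤ x) (hx₂ : x ≤ γ₂) : S.AdmitsEDE x := by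
  induction x using EReal.rec with
  | bot => simp at hx₁
  | coe g => exact Or.inl ⟨g, rfl, P, h₁.of_le_of_le h₂ (mod_cast hx₁) (mod_cast hx₂)⟩
  | top => simp at hx₂

theorem IsED.admitsEDE_of_ae_eq_zero {γ : ℝ} {P : Ω → E →L[ℝ] E} (h : S.IsED γ P)
    (h0 : ∀ᵐ ω ∂ℙ, P ω = 0) {x : EReal} (hx : x ≤ γ) : S.AdmitsEDE x := by
  induction x using EReal.rec with
  | bot => exact Or.inr (Or.inr ⟨rfl, γ, P, h, h0⟩)
  | coe g => exact Or.inl ⟨g, rfl, P, h.of_ae_eq_zero h0 (mod_cast hx)⟩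
  | top => simp at hx

theorem IsED.admitsEDE_of_ae_eq_one {γ : ℝ} {P : Ω → E →L[ℝ] E} (h : S.IsED γ P)
    (h1 : ∀ᵐ ω ∂ℙ, P ω = 1) {x : EReal} (hx : γ ≤ x) : S.AdmitsEDE x := by
  induction x using EReal.rec with
  | bot => simp at hx
  | coe g => exact Or.inl ⟨g, rfl, P, h.of_ae_eq_one h1 (mod_cast hx)⟩
  | top => exact Or.inr (Or.inl ⟨rfl, γ, P, h, h1⟩)

theorem admitsEDE_of_zero_eq_one (h : (0 : E →L[ℝ] E) = 1) (x : EReal) : S.AdmitsEDE x := by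
  have hzero (f : E →L[ℝ] E) : f = 0 := by rw [← mul_one f, ← h, mul_zero]
  have hED (g : ℝ) : S.IsED g fun _ => 0 :=
    ⟨S.invProjector_zero, 1, one_pos, 1, le_rfl, ae_of_all _ fun ω =>
      ⟨fun t _ => by rw [hzero (_ * _), norm_zero]; positivity,
        fun t _ => by rw [hzero (_ * _), norm_zero]; positivity⟩⟩
  induction x using EReal.rec with
  | bot => exact Or.inr (Or.inr ⟨rfl, 0, _, hED 0, ae_of_all _ fun _ => rfl⟩)
  | coe g => exact Or.inl ⟨g, rfl, _, hED g⟩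
  | top => exact Or.inr (Or.inl ⟨rfl, 0, _, hED 0, ae_of_all _ fun _ => h⟩)

theorem IsErgodic.ae_eq_or_ae_ne [IsProbabilityMeasure ℙ] (hErg : S.IsErgodic)
    {P Q : Ω → E →L[ℝ] E} (hP : S.InvProjector P) (hQ : S.InvProjector Q) :
    (∀ᵐ ω ∂ℙ, P ω = Q ω) ∨ ∀ᵐ ω ∂ℙ, P ω ≠ Q ω := by
  have hA : MeasurableSet {ω | P ω = Q ω} := ContinuousLinearMap.measurableSet_eq hP.1 hQ.1
  have hinv (t : ℝ) : S.θ t ⁻¹' {ω | P ω = Q ω} = {ω | P ω = Q ω} := by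
    ext ω
    exact ⟨fun h => (S.Φ_isUnit t ω).mul_left_cancel (by rw [← hP.2.2, ← hQ.2.2, h.out]),
      fun h => (S.Φ_isUnit t ω).mul_right_cancel (by rw [hP.2.2, hQ.2.2, h.out])⟩
  rcases hErg _ hA hinv with h0 | h1
  · exact Or.inr (measure_eq_zero_iff_ae_notMem.1 h0)
  · exact Or.inl ((ae_iff_measure_eq hA.nullMeasurableSet).2 (by rw [h1, measure_univ]))

theorem not_ae_eq_succ_of_spectrum_eq [IsProbabilityMeasure ℙ] {n : ℕ} {a b : ℕ → EReal}
    (hab : ∀ i < n, a i ≤ b i)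
    (hspec : S.spectrum = ⋃ i ∈ Finset.range n, Set.Icc (a i) (b i))
    {γ : ℕ → ℝ} {P : ℕ → Ω → E →L[ℝ] E} (hP0 : ∀ ω, P 0 ω = 0) (hPn : ∀ ω, P n ω = 1)
    (hγ : ∀ i, 0 < i → i < n → b (i - 1) < (γ i : EReal) ∧ (γ i : EReal) < a i)
    (hED : ∀ i, 0 < i → i < n → S.IsED (γ i) (P i)) {i : ℕ} (hi : i < n) :
    ¬ ∀ᵐ ω ∂ℙ, P i ω = P (i + 1) ω := by
  intro heq
  have hgap : ∀ x ∈ Set.Icc (a i) (b i), ¬ S.AdmitsEDE x := fun x hx =>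
    show x ∈ S.spectrum from hspec ▸ Set.mem_biUnion (Finset.mem_range.2 hi) hx
  rcases Nat.eq_zero_or_pos i with rfl | hi0
  · rcases (by omega : n = 1 ∨ 1 < n) with rfl | hn
    · obtain ⟨ω, hω⟩ := heq.exists
      exact hgap (a 0) ⟨le_rfl, hab 0 hi⟩
        (S.admitsEDE_of_zero_eq_one (by rw [← hP0 ω, hω, hPn]) _)
    · have h0 : ∀ᵐ ω ∂ℙ, P 1 ω = 0 := by
        filter_upwards [heq] with ω hω
        rw [← hω, hP0]
      exact hgap (a 0) ⟨le_rfl, hab 0 hi⟩ ((hED 1 one_pos hn).admitsEDE_of_ae_eq_zero h0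
        ((hab 0 hi).trans (hγ 1 one_pos hn).1.le))
  · rcases (by omega : i + 1 = n ∨ i + 1 < n) with hn | hn
    · have h1 : ∀ᵐ ω ∂ℙ, P i ω = 1 := by
        filter_upwards [heq] with ω hω
        rw [hω, hn, hPn]
      exact hgap (b i) ⟨hab i hi, le_rfl⟩ ((hED i hi0 hi).admitsEDE_of_ae_eq_one h1
        ((hγ i hi0 hi).2.le.trans (hab i hi)))
    · have hED' : S.IsED (γ (i + 1)) (P i) :=
        (hED (i + 1) i.succ_pos hn).congr_ae (hED i hi0 hi).1 heq
      have hb : b i < γ (i + 1) := by simpa using (hγ (i + 1) i.succ_pos hn).1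
      exact hgap (a i) ⟨le_rfl, hab i hi⟩ ((hED i hi0 hi).admitsEDE_of_le_of_le hED'
        (hγ i hi0 hi).2.le ((hab i hi).trans hb.le))

theorem ae_nested_of_monotone_rates [SFinite ℙ] {n : ℕ} {γ : ℕ → ℝ} {P : ℕ → Ω → E →L[ℝ] E}
    (hP0 : ∀ ω, P 0 ω = 0) (hPn : ∀ ω, P n ω = 1)
    (hγ : ∀ i j, 0 < i → i ≤ j → j < n → γ i ≤ γ j)
    (hED : ∀ i, 0 < i → i < n → S.IsED (γ i) (P i)) :
    ∀ᵐ ω ∂ℙ, ∀ i j, i ≤ j → j ≤ n → P j ω * P i ω = P i ω ∧ P i ω * P j ω = P i ω := by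
  refine ae_all_iff.2 fun i => ae_all_iff.2 fun j => ?_
  rcases Nat.eq_zero_or_pos i with rfl | hi
  · exact ae_of_all _ fun ω _ _ => by simp [hP0]
  rcases lt_or_ge j n with hj | hj
  · by_cases hij : i ≤ j
    · filter_upwards [(hED i hi (by omega)).ae_mul_eq_of_le (hED j (by omega) hj)
        (hγ i j hi hij hj)] with ω h _ _ using h
    · exact ae_of_all _ fun ω h => absurd h hij
  · exact ae_of_all _ fun ω _ hjn => by simp [le_antisymm hjn hj, hPn]

end LinRDS

theorem interlaced_le {n : ℕ} {a b : ℕ → EReal} {γ : ℕ → ℝ} (hab : ∀ i < n, a i ≤ b i)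
    (hγ : ∀ i, 0 < i → i < n → b (i - 1) < (γ i : EReal) ∧ (γ i : EReal) < a i)
    {i j : ℕ} (hi : 0 < i) (hij : i ≤ j) (hj : j < n) : γ i ≤ γ j := by
  induction j, hij using Nat.le_induction with
  | base => exact le_rfl
  | succ k hik ih =>
    have hk : (γ k : EReal) < γ (k + 1) :=
      (hγ k (by omega) (by omega)).2.trans ((hab k (by omega)).trans_lt
        (by simpa using (hγ (k + 1) (by omega) hj).1))
    exact (ih (by omega)).trans (mod_cast hk.le)

/-- Indices start at `0`: `[a i, b i]` and the `i`-th summand are the paper's `[a_{i+1}, b_{i+1}]`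
and `W_{i+1}`. -/
theorem spectral_manifolds_general
    {Ω : Type*} [MeasurableSpace Ω] {ℙ : Measure Ω} [IsProbabilityMeasure ℙ] {d : ℕ}
    (S : LinRDS ℙ d) (hErg : S.IsErgodic)
    (n : ℕ) (a b : ℕ → EReal)
    (hab : ∀ i < n, a i ≤ b i)
    (hspec : S.spectrum = ⋃ i ∈ Finset.range n, Set.Icc (a i) (b i))
    (γ : ℕ → ℝ)
    (P : ℕ → Ω → EuclideanSpace ℝ (Fin d) →L[ℝ] EuclideanSpace ℝ (Fin d))
    (hP0 : ∀ ω, P 0 ω = 0)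
    (hPn : ∀ ω, P n ω = 1)
    (hγ : ∀ i, 0 < i → i < n → b (i - 1) < (γ i : EReal) ∧ (γ i : EReal) < a i)
    (hED : ∀ i, 0 < i → i < n → S.IsED (γ i) (P i)) :
    ∀ᵐ ω ∂ℙ,
      DirectSum.IsInternal (fun i : Fin n =>
        LinearMap.range
          (P ((i : ℕ) + 1) ω : EuclideanSpace ℝ (Fin d) →ₗ[ℝ] EuclideanSpace ℝ (Fin d)) ⊓
          LinearMap.ker
          (P (i : ℕ) ω : EuclideanSpace ℝ (Fin d) →ₗ[ℝ] EuclideanSpace ℝ (Fin d))) ∧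
      ∀ i : Fin n,
        LinearMap.range
          (P ((i : ℕ) + 1) ω : EuclideanSpace ℝ (Fin d) →ₗ[ℝ] EuclideanSpace ℝ (Fin d)) ⊓
          LinearMap.ker
          (P (i : ℕ) ω : EuclideanSpace ℝ (Fin d) →ₗ[ℝ] EuclideanSpace ℝ (Fin d)) ≠ ⊥ := by
  have hproj : ∀ i ≤ n, S.InvProjector (P i) := by
    intro i hi
    rcases Nat.eq_zero_or_pos i with rfl | hi0
    · exact funext hP0 ▸ S.invProjector_zero
    rcases hi.lt_or_eq with hi | rfl
    · exact (hED i hi0 hi).1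
    · exact funext hPn ▸ S.invProjector_one
  have hne : ∀ i < n, ∀ᵐ ω ∂ℙ, P i ω ≠ P (i + 1) ω := fun i hi =>
    (hErg.ae_eq_or_ae_ne (hproj i hi.le) (hproj (i + 1) hi)).resolve_left
      (S.not_ae_eq_succ_of_spectrum_eq hab hspec hP0 hPn hγ hED hi)
  filter_upwards [S.ae_nested_of_monotone_rates hP0 hPn (fun i j => interlaced_le hab hγ) hED,
    (ae_ball_iff (Set.to_countable (Set.Iio n))).2 hne] with ω hchain hneω
  exact isInternal_range_inf_ker_of_chain
    (Q := fun i => (P i ω : EuclideanSpace ℝ (Fin d) →ₗ[ℝ] EuclideanSpace ℝ (Fin d)))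
    (by rw [hP0, ContinuousLinearMap.toLinearMap_zero])
    (by rw [hPn, ContinuousLinearMap.toLinearMap_one])
    (fun i j hij hj => (hchain i j hij hj).imp
      (fun h => by rw [← ContinuousLinearMap.toLinearMap_mul, h])
      (fun h => by rw [← ContinuousLinearMap.toLinearMap_mul, h]))
    (fun i hi h => hneω i hi (ContinuousLinearMap.coe_injective h))

/-- **Spectral manifolds.** Suppose the dichotomy spectrum of an ergodic linear
random dynamical system is `Σ = [a 0, b 0] ∪ … ∪ [a (n-1), b (n-1)]` (indices `0, …, n-1`
here correspond to `1, …, n` in the paper). With `P 0 ≡ 0`, `P n ≡ Id`, and `P i` (for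
`0 < i < n`) a projector of an exponential dichotomy with growth rate `γ i ∈ (b (i-1), a i)`,
the spectral manifolds `W i ω = range (P i ω) ∩ ker (P (i-1) ω)`, `i = 1, …, n`, almost
surely form a Whitney sum decomposition of `ℝ^d` into nontrivial subspaces. -/
theorem spectral_manifolds
    {Ω : Type*} [MeasurableSpace Ω] {ℙ : Measure Ω} [IsProbabilityMeasure ℙ] {d : ℕ}
    (S : LinRDS ℙ d) (hErg : S.IsErgodic)
    (n : ℕ) (hn : 1 ≤ n) (a b : ℕ → EReal)
    (hab : ∀ i < n, a i ≤ b i)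
    (hba : ∀ i, i + 1 < n → b i < a (i + 1))
    (hspec : S.spectrum = ⋃ i ∈ Finset.range n, Set.Icc (a i) (b i))
    (γ : ℕ → ℝ)
    (P : ℕ → Ω → EuclideanSpace ℝ (Fin d) →L[ℝ] EuclideanSpace ℝ (Fin d))
    (hP0 : ∀ ω, P 0 ω = 0)
    (hPn : ∀ ω, P n ω = 1)
    (hγ : ∀ i, 0 < i → i < n → b (i - 1) < (γ i : EReal) ∧ (γ i : EReal) < a i)
    (hED : ∀ i, 0 < i → i < n → S.IsED (γ i) (P i)) :
    ∀ᵐ ω ∂ℙ,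
      DirectSum.IsInternal (fun i : Fin n =>
        LinearMap.range
          (P ((i : ℕ) + 1) ω : EuclideanSpace ℝ (Fin d) →ₗ[ℝ] EuclideanSpace ℝ (Fin d)) ⊓
          LinearMap.ker
          (P (i : ℕ) ω : EuclideanSpace ℝ (Fin d) →ₗ[ℝ] EuclideanSpace ℝ (Fin d))) ∧
      ∀ i : Fin n,
        LinearMap.range
          (P ((i : ℕ) + 1) ω : EuclideanSpace ℝ (Fin d) →ₗ[ℝ] EuclideanSpace ℝ (Fin d)) ⊓
          LinearMap.ker
          (P (i : ℕ) ω : EuclideanSpace ℝ (Fin d) →ₗ[ℝ] EuclideanSpace ℝ (Fin d)) ≠ ⊥ :=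
  spectral_manifolds_general S hErg n a b hab hspec γ P hP0 hPn hγ hED
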